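/- If p is a polynomial in three variables over ℂ such that p(tr(x₁), tr(x₂), tr(x₁x₂⁻¹)) = 0 for all x₁, x₂ ∈ SL(2,ℂ), then p = 0. -/

import Mathlib

/-!
Every triple `(a, b, c)` of traces is attained: choose `ζ η` with `ζ * η = 1` and
`ζ + η = a * b - c` (a root of `X² - (ab - c)X + 1`); then `x₁ = !![a, -1; 1, 0]` and
`x₂ = !![0, ζ; -η, b]` have traces `a`, `b`, and `tr (x₁ x₂⁻¹) = a * b - ζ - η = c`.
So `p` vanishes on all of `ℂ³`, hence is zero because `ℂ` is infinite.
-/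

open Polynomial in
theorem exists_mul_eq_one_and_add_eq {K : Type*} [Field K] [IsAlgClosed K] (t : K) :
    ∃ ζ η : K, ζ * η = 1 ∧ ζ + η = t := by
  have hdeg : (X ^ 2 - C t * X + 1 : K[X]).degree = 2 := by compute_degree!
  obtain ⟨ζ, hζ⟩ := IsAlgClosed.exists_root (X ^ 2 - C t * X + 1 : K[X]) (by simp [hdeg])
  refine ⟨ζ, t - ζ, ?_, by ring⟩
  simp only [IsRoot, eval_add, eval_sub, eval_pow, eval_mul, eval_C, eval_X, eval_one] at hζ
  linear_combination -hζ

namespace Matrix.SpecialLinearGroup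

theorem exists_trace_eq_and_trace_mul_inv_eq {K : Type*} [Field K] [IsAlgClosed K] (a b c : K) :
    ∃ x₁ x₂ : SpecialLinearGroup (Fin 2) K, trace (x₁ : Matrix (Fin 2) (Fin 2) K) = a ∧
      trace (x₂ : Matrix (Fin 2) (Fin 2) K) = b ∧
      trace ((x₁ * x₂⁻¹ : SpecialLinearGroup (Fin 2) K) : Matrix (Fin 2) (Fin 2) K) = c := by
  obtain ⟨ζ, η, hζη, hsum⟩ := exists_mul_eq_one_and_add_eq (a * b - c)
  let x₁ : SpecialLinearGroup (Fin 2) K := ⟨!![a, -1; 1, 0], by simp [det_fin_two_of]⟩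
  let x₂ : SpecialLinearGroup (Fin 2) K := ⟨!![0, ζ; -η, b], by simp [det_fin_two_of, hζη]⟩
  refine ⟨x₁, x₂, by simp [x₁, trace_fin_two], by simp [x₂, trace_fin_two], ?_⟩
  rw [coe_mul, coe_inv]
  simp [x₁, x₂, adjugate_fin_two_of, trace_fin_two]
  linear_combination -hsum

end Matrix.SpecialLinearGroup

theorem trace_polynomial_relations_trivial (p : MvPolynomial (Fin 3) ℂ)
    (h : ∀ x₁ x₂ : Matrix.SpecialLinearGroup (Fin 2) ℂ,
      MvPolynomial.eval
        ![Matrix.trace (x₁ : Matrix (Fin 2) (Fin 2) ℂ),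
          Matrix.trace (x₂ : Matrix (Fin 2) (Fin 2) ℂ),
          Matrix.trace ((x₁ * x₂⁻¹ : Matrix.SpecialLinearGroup (Fin 2) ℂ) :
            Matrix (Fin 2) (Fin 2) ℂ)] p = 0) :
    p = 0 := by
  refine MvPolynomial.funext fun x => ?_
  obtain ⟨x₁, x₂, h₁, h₂, h₁₂⟩ :=
    Matrix.SpecialLinearGroup.exists_trace_eq_and_trace_mul_inv_eq (x 0) (x 1) (x 2)
  have hx : ![x 0, x 1, x 2] = x := by ext i; fin_cases i <;> rfl
  simpa only [h₁, h₂, h₁₂, hx, map_zero] using h x₁ x₂
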